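/- arXiv:1811.00866 — 7 statements merged into one kernel-verified Lean document; each statement's English description precedes it below -/
import Mathlib

section
/- Let f be an m-layer neural network with weights W^(k) ∈ ℝ^{n_k×n_{k-1}}, biases b^(k) ∈ ℝ^{n_k}, and activation σ : ℝ → ℝ applied coordinatewise, i.e. Φ_0(x) = x, Φ_k(x) = σ(W^(k) Φ_{k-1}(x) + b^(k)) for 1 ≤ k ≤ m−1, and f(x) = W^(m) Φ_{m-1}(x) + b^(m). Fix x₀ ∈ ℝ^{n₀}, p ≥ 1, ε > 0. Suppose that for every layer k ∈ {1,…,m−1} and neuron r ∈ {1,…,n_k} there are reals l^(k)_r ≤ u^(k)_r such that l^(k)_r ≤ (W^(k) Φ_{k-1}(x) + b^(k))_r ≤ u^(k)_r for all x with ‖x − x₀‖_p ≤ ε, and there are reals α^(k)_{U,r} ≥ 0, α^(k)_{L,r} ≥ 0, β^(k)_{U,r}, β^(k)_{L,r} such that α^(k)_{L,r}(y + β^(k)_{L,r}) ≤ σ(y) ≤ α^(k)_{U,r}(y + β^(k)_{U,r}) for all y ∈ [l^(k)_r, u^(k)_r]. For each output index j define row vectors recursively: Λ^(m)_{j,:}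 = e_jᵀ (the j-th standard unit vector), and for k from m down to 1, Λ^(k-1)_{j,i} = (Λ^(k)_{j,:} W^(k))_i · λ^(k-1)_{j,i}, where for 1 ≤ k ≤ m−1, λ^(k)_{j,i} = α^(k)_{U,i} if Λ^(k+1)_{j,:} W^(k+1)_{:,i} ≥ 0 and λ^(k)_{j,i} = α^(k)_{L,i} otherwise, and λ^(0)_{j,i} = 1; also define Δ^(k)_{i,j} = β^(k)_{U,i} if Λ^(k+1)_{j,:} W^(k+1)_{:,i} ≥ 0 and Δ^(k)_{i,j} = β^(k)_{L,i} otherwise (for 1 ≤ k ≤ m−1), with Δ^(m)_{i,j} = 0. Analogously define Ω^(m)_{j,:} = e_jᵀ, Ω^(k-1)_{j,i} = (Ω^(k)_{j,:} W^(k))_i · ω^(k-1)_{j,i} with ω^(k)_{j,i} = α^(k)_{L,i} if Ω^(k+1)_{j,:} W^(k+1)_{:,i} ≥ 0 and α^(k)_{U,i} otherwise, ω^(0)_{j,i} = 1, and Θ^(k)_{i,j} = β^(k)_{L,i} if Ω^(k+1)_{j,:} W^(k+1)_{:,i} ≥ 0 and β^(k)_{U,i} otherwise, Θ^(m)_{i,j}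 = 0. Then for every j and every x with ‖x − x₀‖_p ≤ ε: Ω^(0)_{j,:} x + Σ_{k=1}^{m} Ω^(k)_{j,:}(b^(k) + Θ^(k)_{:,j}) ≤ f_j(x) ≤ Λ^(0)_{j,:} x + Σ_{k=1}^{m} Λ^(k)_{j,:}(b^(k) + Δ^(k)_{:,j}). -/
open Matrix Finset
open scoped ENNReal

/-!
On its pre-activation interval each activation is sandwiched between two affine functions, so
for any coefficient `c` the product `c * σ y` is bounded above by `c` times the upper or the lower
affine function, according to the sign of `c`. Starting from the functional `e_j` at the output,
every hidden layer thus trades `(Λ^(k+1) W^(k+1)) ⬝ Φ_k(x)` for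
`Λ^(k) ⬝ (W^(k) Φ_{k-1}(x) + b^(k) + Δ^(k))`, which is `(Λ^(k) W^(k)) ⬝ Φ_{k-1}(x)` plus a
constant; telescoping down to `Φ_0(x) = x` leaves `Λ^(0) ⬝ x` plus the accumulated constants.
The lower bound is the same argument applied to `-Ω`.
-/

section Relaxation

variable {R : Type*} [Ring R] [LinearOrder R] [IsOrderedRing R]

theorem mul_le_upper_relaxation {c s y aU aL bU bL : R}
    (hL : aL * (y + bL) ≤ s) (hU : s ≤ aU * (y + bU)) :
    c * s ≤ c * (if 0 ≤ c then aU else aL) * (y + if 0 ≤ c then bU else bL) := by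
  split_ifs with hc
  · rw [mul_assoc]; exact mul_le_mul_of_nonneg_left hU hc
  · rw [mul_assoc]; exact mul_le_mul_of_nonpos_left hL (le_of_not_ge hc)

theorem lower_relaxation_le_mul {c s y aU aL bU bL : R}
    (hL : aL * (y + bL) ≤ s) (hU : s ≤ aU * (y + bU)) :
    c * (if 0 ≤ c then aL else aU) * (y + if 0 ≤ c then bL else bU) ≤ c * s := by
  split_ifs with hc
  · rw [mul_assoc]; exact mul_le_mul_of_nonneg_left hL hc
  · rw [mul_assoc]; exact mul_le_mul_of_nonpos_left hU (le_of_not_ge hc)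

theorem dotProduct_comp_le_of_upper_relaxation {ι : Type*} [Fintype ι] (σ : R → R)
    (c z αU αL βU βL Λ Δ : ι → R)
    (hσ : ∀ i, αL i * (z i + βL i) ≤ σ (z i) ∧ σ (z i) ≤ αU i * (z i + βU i))
    (hΛ : ∀ i, Λ i = c i * if 0 ≤ c i then αU i else αL i)
    (hΔ : ∀ i, Δ i = if 0 ≤ c i then βU i else βL i) :
    c ⬝ᵥ (fun i => σ (z i)) ≤ Λ ⬝ᵥ (z + Δ) :=
  sum_le_sum fun i _ => by
    rw [Pi.add_apply, hΛ, hΔ]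
    exact mul_le_upper_relaxation (hσ i).1 (hσ i).2

theorem le_dotProduct_comp_of_lower_relaxation {ι : Type*} [Fintype ι] (σ : R → R)
    (c z αU αL βU βL Ω Θ : ι → R)
    (hσ : ∀ i, αL i * (z i + βL i) ≤ σ (z i) ∧ σ (z i) ≤ αU i * (z i + βU i))
    (hΩ : ∀ i, Ω i = c i * if 0 ≤ c i then αL i else αU i)
    (hΘ : ∀ i, Θ i = if 0 ≤ c i then βL i else βU i) :
    Ω ⬝ᵥ (z + Θ) ≤ c ⬝ᵥ (fun i => σ (z i)) :=
  sum_le_sum fun i _ => by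
    rw [Pi.add_apply, hΩ, hΘ]
    exact lower_relaxation_le_mul (hσ i).1 (hσ i).2

end Relaxation

section Propagation

variable {R : Type*} [Ring R] [PartialOrder R] [IsOrderedAddMonoid R]
  {ι : ℕ → Type*} [∀ k, Fintype (ι k)]
  (W : ∀ k, Matrix (ι (k + 1)) (ι k) R) (b : ∀ k, ι (k + 1) → R) (v : ∀ k, ι k → R)

theorem dotProduct_affine_le_of_backward_step (Λ Δ : ∀ k, ι k → R) (N : ℕ)
    (hΛ₀ : Λ 0 = Λ 1 ᵥ* W 0)
    (hstep : ∀ k, k + 1 ≤ N →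
      (Λ (k + 2) ᵥ* W (k + 1)) ⬝ᵥ v (k + 1) ≤ Λ (k + 1) ⬝ᵥ (W k *ᵥ v k + b k + Δ (k + 1))) :
    Λ (N + 1) ⬝ᵥ (W N *ᵥ v N + b N + Δ (N + 1)) ≤
      Λ 0 ⬝ᵥ v 0 + ∑ k ∈ range (N + 1), Λ (k + 1) ⬝ᵥ (b k + Δ (k + 1)) := by
  have hdecomp : ∀ k, Λ (k + 1) ⬝ᵥ (W k *ᵥ v k + b k + Δ (k + 1)) =
      (Λ (k + 1) ᵥ* W k) ⬝ᵥ v k + Λ (k + 1) ⬝ᵥ (b k + Δ (k + 1)) := fun k => by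
    rw [add_assoc, dotProduct_add, dotProduct_mulVec]
  induction N with
  | zero => simp [hdecomp, hΛ₀]
  | succ N ih =>
    calc Λ (N + 2) ⬝ᵥ (W (N + 1) *ᵥ v (N + 1) + b (N + 1) + Δ (N + 2))
        = (Λ (N + 2) ᵥ* W (N + 1)) ⬝ᵥ v (N + 1) + Λ (N + 2) ⬝ᵥ (b (N + 1) + Δ (N + 2)) :=
          hdecomp (N + 1)
      _ ≤ Λ (N + 1) ⬝ᵥ (W N *ᵥ v N + b N + Δ (N + 1)) + Λ (N + 2) ⬝ᵥ (b (N + 1) + Δ (N + 2)) :=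
          by gcongr; exact hstep N le_rfl
      _ ≤ _ := by
          rw [sum_range_succ, ← add_assoc]
          gcongr
          exact ih fun k hk => hstep k (by omega)

theorem le_dotProduct_affine_of_backward_step (Ω Θ : ∀ k, ι k → R) (N : ℕ)
    (hΩ₀ : Ω 0 = Ω 1 ᵥ* W 0)
    (hstep : ∀ k, k + 1 ≤ N →
      Ω (k + 1) ⬝ᵥ (W k *ᵥ v k + b k + Θ (k + 1)) ≤ (Ω (k + 2) ᵥ* W (k + 1)) ⬝ᵥ v (k + 1)) :
    Ω 0 ⬝ᵥ v 0 + ∑ k ∈ range (N + 1), Ω (k + 1) ⬝ᵥ (b k + Θ (k + 1)) ≤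
      Ω (N + 1) ⬝ᵥ (W N *ᵥ v N + b N + Θ (N + 1)) := by
  have hstep' : ∀ k, k + 1 ≤ N → ((-Ω) (k + 2) ᵥ* W (k + 1)) ⬝ᵥ v (k + 1) ≤
      (-Ω) (k + 1) ⬝ᵥ (W k *ᵥ v k + b k + Θ (k + 1)) := fun k hk => by
    simpa only [Pi.neg_apply, neg_vecMul, neg_dotProduct, neg_le_neg_iff] using hstep k hk
  have h := dotProduct_affine_le_of_backward_step W b v (-Ω) Θ N
    (by rw [Pi.neg_apply, Pi.neg_apply, hΩ₀, neg_vecMul]) hstep'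
  simp only [Pi.neg_apply, neg_dotProduct, sum_neg_distrib] at h
  rwa [← neg_add, neg_le_neg_iff] at h

end Propagation

theorem crown_explicit_output_bounds_general (m₀ : ℕ) (n : ℕ → ℕ)
    (W : (k : ℕ) → Matrix (Fin (n (k + 1))) (Fin (n k)) ℝ)
    (b : (k : ℕ) → Fin (n (k + 1)) → ℝ)
    (σ : ℝ → ℝ)
    -- the network
    (Φ : (k : ℕ) → (Fin (n 0) → ℝ) → (Fin (n k) → ℝ))
    (hΦ0 : ∀ x, Φ 0 x = x)
    (hΦ : ∀ k, k + 1 ≤ m₀ → ∀ x,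
      Φ (k + 1) x = fun r => σ (((W k).mulVec (Φ k x) + b k) r))
    (f : (Fin (n 0) → ℝ) → (Fin (n (m₀ + 1)) → ℝ))
    (hf : ∀ x, f x = (W m₀).mulVec (Φ m₀ x) + b m₀)
    -- the perturbation ball
    (p : ℝ≥0∞) (x₀ : Fin (n 0) → ℝ) (ε : ℝ)
    -- pre-activation bounds for hidden layers k+1 ∈ {1, …, m₀}
    (l u : (k : ℕ) → Fin (n k) → ℝ)
    (hpre : ∀ k, k + 1 ≤ m₀ → ∀ r : Fin (n (k + 1)), ∀ x : Fin (n 0) → ℝ,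
      ‖(WithLp.equiv p (Fin (n 0) → ℝ)).symm (x - x₀)‖ ≤ ε →
      l (k + 1) r ≤ ((W k).mulVec (Φ k x) + b k) r ∧
        ((W k).mulVec (Φ k x) + b k) r ≤ u (k + 1) r)
    -- linear bounds on the activation function for hidden layers k+1 ∈ {1, …, m₀}
    (αU αL βU βL : (k : ℕ) → Fin (n k) → ℝ)
    (hσbound : ∀ k, k + 1 ≤ m₀ → ∀ r : Fin (n (k + 1)),
      ∀ y ∈ Set.Icc (l (k + 1) r) (u (k + 1) r),
      αL (k + 1) r * (y + βL (k + 1) r) ≤ σ y ∧ σ y ≤ αU (k + 1) r * (y + βU (k + 1) r))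
    -- the output coordinate
    (j : Fin (n (m₀ + 1)))
    -- the backward recursion for the upper bound
    (Λ Δ : (k : ℕ) → Fin (n k) → ℝ)
    (hΛtop : ∀ i, Λ (m₀ + 1) i = if i = j then 1 else 0)
    (hΛ : ∀ k, k ≤ m₀ → ∀ i : Fin (n k),
      Λ k i = (∑ r, Λ (k + 1) r * W k r i) *
        (if k = 0 then 1
         else if 0 ≤ ∑ r, Λ (k + 1) r * W k r i then αU k i else αL k i))
    (hΔtop : ∀ i, Δ (m₀ + 1) i = 0)
    (hΔ : ∀ k, 1 ≤ k → k ≤ m₀ → ∀ i : Fin (n k),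
      Δ k i = if 0 ≤ ∑ r, Λ (k + 1) r * W k r i then βU k i else βL k i)
    -- the backward recursion for the lower bound
    (Ω Θ : (k : ℕ) → Fin (n k) → ℝ)
    (hΩtop : ∀ i, Ω (m₀ + 1) i = if i = j then 1 else 0)
    (hΩ : ∀ k, k ≤ m₀ → ∀ i : Fin (n k),
      Ω k i = (∑ r, Ω (k + 1) r * W k r i) *
        (if k = 0 then 1
         else if 0 ≤ ∑ r, Ω (k + 1) r * W k r i then αL k i else αU k i))
    (hΘtop : ∀ i, Θ (m₀ + 1) i = 0)
    (hΘ : ∀ k, 1 ≤ k → k ≤ m₀ → ∀ i : Fin (n k),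
      Θ k i = if 0 ≤ ∑ r, Ω (k + 1) r * W k r i then βL k i else βU k i) :
    ∀ x : Fin (n 0) → ℝ, ‖(WithLp.equiv p (Fin (n 0) → ℝ)).symm (x - x₀)‖ ≤ ε →
      (∑ i, Ω 0 i * x i) +
          (∑ k ∈ Finset.range (m₀ + 1), ∑ i, Ω (k + 1) i * (b k i + Θ (k + 1) i)) ≤ f x j ∧
      f x j ≤ (∑ i, Λ 0 i * x i) +
          (∑ k ∈ Finset.range (m₀ + 1), ∑ i, Λ (k + 1) i * (b k i + Δ (k + 1) i)) := by
  intro x hx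
  set z := fun k => W k *ᵥ Φ k x + b k
  have hσz : ∀ k, k + 1 ≤ m₀ → ∀ r, αL (k + 1) r * (z k r + βL (k + 1) r) ≤ σ (z k r) ∧
      σ (z k r) ≤ αU (k + 1) r * (z k r + βU (k + 1) r) :=
    fun k hk r => hσbound k hk r _ (hpre k hk r x hx)
  have hout : ∀ E D : Fin (n (m₀ + 1)) → ℝ, (∀ i, E i = if i = j then 1 else 0) →
      (∀ i, D i = 0) → E ⬝ᵥ (z m₀ + D) = f x j := fun E D hE hD => by
    simp [dotProduct, hE, hD, hf, z]
  constructor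
  · have h := le_dotProduct_affine_of_backward_step W b (fun k => Φ k x) Ω Θ m₀
      (funext fun i => (hΩ 0 (Nat.zero_le _) i).trans (by rw [if_pos rfl, mul_one]; rfl))
      fun k hk => by
        rw [hΦ k hk x]
        exact le_dotProduct_comp_of_lower_relaxation σ _ (z k) _ _ _ _ _ _ (hσz k hk)
          (fun i => (hΩ (k + 1) hk i).trans (by rw [if_neg (Nat.add_one_ne_zero k)]; rfl))
          (fun i => hΘ (k + 1) (Nat.le_add_left 1 k) hk i)
    rwa [hout _ _ hΩtop hΘtop, hΦ0] at h
  · have h := dotProduct_affine_le_of_backward_step W b (fun k => Φ k x) Λ Δ m₀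
      (funext fun i => (hΛ 0 (Nat.zero_le _) i).trans (by rw [if_pos rfl, mul_one]; rfl))
      fun k hk => by
        rw [hΦ k hk x]
        exact dotProduct_comp_le_of_upper_relaxation σ _ (z k) _ _ _ _ _ _ (hσz k hk)
          (fun i => (hΛ (k + 1) hk i).trans (by rw [if_neg (Nat.add_one_ne_zero k)]; rfl))
          (fun i => hΔ (k + 1) (Nat.le_add_left 1 k) hk i)
    rwa [hout _ _ hΛtop hΔtop, hΦ0] at h

/-- **CROWN explicit output bounds (Theorem 3.1).**
We consider an `m`-layer network with `m = m₀ + 1 ≥ 1`.  Layer sizes are `n 0, …, n m`;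
`W k : ℝ^{n (k+1) × n k}` and `b k : ℝ^{n (k+1)}` are the weight matrix and bias of
(paper-)layer `k + 1`, so that `Φ 0 x = x`, `Φ (k+1) x = σ (W k (Φ k x) + b k)` for the hidden
layers `k + 1 ≤ m₀`, and `f x = W m₀ (Φ m₀ x) + b m₀`.

For every hidden layer `k + 1 ∈ {1, …, m₀}` and neuron `r` we are given pre-activation bounds
`l (k+1) r ≤ (W k (Φ k x) + b k) r ≤ u (k+1) r` valid on the `ℓ_p` ball of radius `ε` around
`x₀`, and nonnegative slopes `αU, αL` and intercepts `βU, βL` with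
`αL (y + βL) ≤ σ y ≤ αU (y + βU)` on `[l, u]`.

The row vectors `Λ k` (resp. `Ω k`) and intercept columns `Δ k` (resp. `Θ k`) are produced by
the sign-based backward recursion of Theorem 3.1, starting from the standard unit vector `e j`
at the output layer.  Then for every `x` in the `ℓ_p` ball,
`Ω 0 ⋅ x + Σ_{k=1}^{m} Ω k ⋅ (b^{(k)} + Θ k) ≤ f_j x ≤ Λ 0 ⋅ x + Σ_{k=1}^{m} Λ k ⋅ (b^{(k)} + Δ k)`. -/
theorem crown_explicit_output_bounds (m₀ : ℕ) (n : ℕ → ℕ)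
    (W : (k : ℕ) → Matrix (Fin (n (k + 1))) (Fin (n k)) ℝ)
    (b : (k : ℕ) → Fin (n (k + 1)) → ℝ)
    (σ : ℝ → ℝ)
    -- the network
    (Φ : (k : ℕ) → (Fin (n 0) → ℝ) → (Fin (n k) → ℝ))
    (hΦ0 : ∀ x, Φ 0 x = x)
    (hΦ : ∀ k, k + 1 ≤ m₀ → ∀ x,
      Φ (k + 1) x = fun r => σ (((W k).mulVec (Φ k x) + b k) r))
    (f : (Fin (n 0) → ℝ) → (Fin (n (m₀ + 1)) → ℝ))
    (hf : ∀ x, f x = (W m₀).mulVec (Φ m₀ x) + b m₀)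
    -- the perturbation ball
    (p : ℝ≥0∞) (hp : 1 ≤ p) (x₀ : Fin (n 0) → ℝ) (ε : ℝ) (hε : 0 < ε)
    -- pre-activation bounds for hidden layers k+1 ∈ {1, …, m₀}
    (l u : (k : ℕ) → Fin (n k) → ℝ)
    (hlu : ∀ k, k + 1 ≤ m₀ → ∀ r : Fin (n (k + 1)), l (k + 1) r ≤ u (k + 1) r)
    (hpre : ∀ k, k + 1 ≤ m₀ → ∀ r : Fin (n (k + 1)), ∀ x : Fin (n 0) → ℝ,
      ‖(WithLp.equiv p (Fin (n 0) → ℝ)).symm (x - x₀)‖ ≤ ε →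
      l (k + 1) r ≤ ((W k).mulVec (Φ k x) + b k) r ∧
        ((W k).mulVec (Φ k x) + b k) r ≤ u (k + 1) r)
    -- linear bounds on the activation function for hidden layers k+1 ∈ {1, …, m₀}
    (αU αL βU βL : (k : ℕ) → Fin (n k) → ℝ)
    (hαU : ∀ k, k + 1 ≤ m₀ → ∀ r : Fin (n (k + 1)), 0 ≤ αU (k + 1) r)
    (hαL : ∀ k, k + 1 ≤ m₀ → ∀ r : Fin (n (k + 1)), 0 ≤ αL (k + 1) r)
    (hσbound : ∀ k, k + 1 ≤ m₀ → ∀ r : Fin (n (k + 1)),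
      ∀ y ∈ Set.Icc (l (k + 1) r) (u (k + 1) r),
      αL (k + 1) r * (y + βL (k + 1) r) ≤ σ y ∧ σ y ≤ αU (k + 1) r * (y + βU (k + 1) r))
    -- the output coordinate
    (j : Fin (n (m₀ + 1)))
    -- the backward recursion for the upper bound
    (Λ Δ : (k : ℕ) → Fin (n k) → ℝ)
    (hΛtop : ∀ i, Λ (m₀ + 1) i = if i = j then 1 else 0)
    (hΛ : ∀ k, k ≤ m₀ → ∀ i : Fin (n k),
      Λ k i = (∑ r, Λ (k + 1) r * W k r i) *
        (if k = 0 then 1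
         else if 0 ≤ ∑ r, Λ (k + 1) r * W k r i then αU k i else αL k i))
    (hΔtop : ∀ i, Δ (m₀ + 1) i = 0)
    (hΔ : ∀ k, 1 ≤ k → k ≤ m₀ → ∀ i : Fin (n k),
      Δ k i = if 0 ≤ ∑ r, Λ (k + 1) r * W k r i then βU k i else βL k i)
    -- the backward recursion for the lower bound
    (Ω Θ : (k : ℕ) → Fin (n k) → ℝ)
    (hΩtop : ∀ i, Ω (m₀ + 1) i = if i = j then 1 else 0)
    (hΩ : ∀ k, k ≤ m₀ → ∀ i : Fin (n k),
      Ω k i = (∑ r, Ω (k + 1) r * W k r i) *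
        (if k = 0 then 1
         else if 0 ≤ ∑ r, Ω (k + 1) r * W k r i then αL k i else αU k i))
    (hΘtop : ∀ i, Θ (m₀ + 1) i = 0)
    (hΘ : ∀ k, 1 ≤ k → k ≤ m₀ → ∀ i : Fin (n k),
      Θ k i = if 0 ≤ ∑ r, Ω (k + 1) r * W k r i then βL k i else βU k i) :
    ∀ x : Fin (n 0) → ℝ, ‖(WithLp.equiv p (Fin (n 0) → ℝ)).symm (x - x₀)‖ ≤ ε →
      (∑ i, Ω 0 i * x i) +
          (∑ k ∈ Finset.range (m₀ + 1), ∑ i, Ω (k + 1) i * (b k i + Θ (k + 1) i)) ≤ f x j ∧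
      f x j ≤ (∑ i, Λ 0 i * x i) +
          (∑ k ∈ Finset.range (m₀ + 1), ∑ i, Λ (k + 1) i * (b k i + Δ (k + 1) i)) :=
  crown_explicit_output_bounds_general m₀ n W b σ Φ hΦ0 hΦ f hf p x₀ ε l u hpre αU αL βU βL hσbound
    j Λ Δ hΛtop hΛ hΔtop hΔ Ω Θ hΩtop hΩ hΘtop hΘ
end

section
/- Under the hypotheses and with the matrices Λ^(k), Δ^(k), Ω^(k), Θ^(k) constructed as in the explicit output bounds theorem (Theorem 3.1 of the paper), let q satisfy 1/q = 1 − 1/p (with q = ∞ when p = 1 and q = 1 when p = ∞). Define γ^U_j = ε‖Λ^(0)_{j,:}‖_q + Λ^(0)_{j,:} x₀ + Σ_{k=1}^{m} Λ^(k)_{j,:}(b^(k) + Δ^(k)_{:,j}) and γ^L_j = −ε‖Ω^(0)_{j,:}‖_q + Ω^(0)_{j,:} x₀ + Σ_{k=1}^{m} Ω^(k)_{j,:}(b^(k) + Θ^(k)_{:,j}). Then for every output index j and every x with ‖x − x₀‖_p ≤ ε, γ^L_j ≤ f_j(x) ≤ γ^U_j. -/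
open Matrix Finset
open scoped ENNReal

/-!
Backward substitution: at each hidden unit the activation is replaced by whichever of its two
linear bounds is valid for the sign of the coefficient in front of it, so the output
coordinate is bounded by an affine function of the input with coefficient vector `Λ 0`.
Hölder's inequality bounds that affine function on the `ℓ_p` ball by its value at the
centre plus `ε ‖Λ 0‖_q`. The lower bound is the upper bound for the negated recursion `-Ω`.
-/

theorem PiLp.sum_mul_le_norm_mul_norm {ι : Type*} [Fintype ι] (p q : ℝ≥0∞)
    [hpq : p.HolderConjugate q] (v w : ι → ℝ) :
    ∑ i, v i * w i ≤ ‖WithLp.toLp p v‖ * ‖WithLp.toLp q w‖ := by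
  have : Fact (1 ≤ p) := ⟨hpq.one_le⟩
  have : Fact (1 ≤ q) := ⟨hpq.symm.one_le⟩
  have hB : ∀ _ : ι, ‖ContinuousLinearMap.mul ℝ ℝ‖ ≤ ((1 : NNReal) : ℝ) := fun _ => by simp
  set B := lp.holderL (p := p) (q := q) 1 (fun _ => ContinuousLinearMap.mul ℝ ℝ) hB
  set e := (lpPiLpₗᵢ (fun _ : ι => ℝ) ℝ (p := p)).symm (WithLp.toLp p v)
  set g := (lpPiLpₗᵢ (fun _ : ι => ℝ) ℝ (p := q)).symm (WithLp.toLp q w)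
  calc ∑ i, v i * w i ≤ ∑ i, |v i * w i| := sum_le_sum fun i _ => le_abs_self _
    _ = ‖B e g‖ := by
      rw [lp.norm_eq_tsum_rpow (by simp)]
      simp [B, e, g, tsum_fintype, lp.holderL, coe_lpPiLpₗᵢ_symm]
    _ ≤ ‖B‖ * ‖e‖ * ‖g‖ := B.le_opNorm₂ e g
    _ ≤ 1 * ‖e‖ * ‖g‖ := by gcongr; exact lp.norm_holderL_le 1 _ hB
    _ = ‖WithLp.toLp p v‖ * ‖WithLp.toLp q w‖ := by simp [e, g]

theorem le_add_sum_range_of_succ_le_add {g c : ℕ → ℝ} {m : ℕ}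
    (h : ∀ k < m, g (k + 1) ≤ g k + c k) : g m ≤ g 0 + ∑ k ∈ range m, c k := by
  have hsum := sum_le_sum fun k hk => sub_le_iff_le_add'.2 (h k (mem_range.1 hk))
  rw [sum_range_sub] at hsum
  linarith

theorem mul_le_mul_ite_of_le_of_le {s t y aL bL aU bU : ℝ}
    (hL : aL * (y + bL) ≤ t) (hU : t ≤ aU * (y + bU)) :
    s * t ≤ s * (if 0 ≤ s then aU else aL) * (y + if 0 ≤ s then bU else bL) := by
  rw [mul_assoc]
  split_ifs with hs
  · exact mul_le_mul_of_nonneg_left hU hs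
  · exact mul_le_mul_of_nonpos_left hL (le_of_not_ge hs)

theorem mul_ite_le_mul_of_le_of_le {s t y aL bL aU bU : ℝ}
    (hL : aL * (y + bL) ≤ t) (hU : t ≤ aU * (y + bU)) :
    s * (if 0 ≤ s then aL else aU) * (y + if 0 ≤ s then bL else bU) ≤ s * t := by
  rw [mul_assoc]
  split_ifs with hs
  · exact mul_le_mul_of_nonneg_left hL hs
  · exact mul_le_mul_of_nonpos_left hU (le_of_not_ge hs)

section BackwardBound

variable {m₀ : ℕ} {n : ℕ → ℕ} {W : (k : ℕ) → Matrix (Fin (n (k + 1))) (Fin (n k)) ℝ}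
  {b : (k : ℕ) → Fin (n (k + 1)) → ℝ} {σ : ℝ → ℝ} {a Λ Δ : (k : ℕ) → Fin (n k) → ℝ}

theorem dotProduct_output_le_input_add_sum
    (ha : ∀ k, k + 1 ≤ m₀ → a (k + 1) = fun r => σ ((W k *ᵥ a k + b k) r))
    (hΔtop : Δ (m₀ + 1) = 0)
    (hstep : ∀ k, k + 1 ≤ m₀ → ∀ i,
      (Λ (k + 2) ᵥ* W (k + 1)) i * σ ((W k *ᵥ a k + b k) i) ≤
        Λ (k + 1) i * ((W k *ᵥ a k + b k) i + Δ (k + 1) i)) :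
    Λ (m₀ + 1) ⬝ᵥ (W m₀ *ᵥ a m₀ + b m₀) ≤
      (Λ 1 ᵥ* W 0) ⬝ᵥ a 0 + ∑ k ∈ range (m₀ + 1), Λ (k + 1) ⬝ᵥ (b k + Δ (k + 1)) := by
  have hlayer : ∀ k, Λ (k + 1) ⬝ᵥ (W k *ᵥ a k + b k + Δ (k + 1)) =
      (Λ (k + 1) ᵥ* W k) ⬝ᵥ a k + Λ (k + 1) ⬝ᵥ (b k + Δ (k + 1)) := fun k => by
    rw [add_assoc, dotProduct_add, dotProduct_mulVec]
  have htelescope := le_add_sum_range_of_succ_le_add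
    (g := fun k => (Λ (k + 1) ᵥ* W k) ⬝ᵥ a k) (c := fun k => Λ (k + 1) ⬝ᵥ (b k + Δ (k + 1)))
    (m := m₀) fun k hk => by
      rw [← hlayer, ha k hk]
      exact sum_le_sum fun i _ => hstep k hk i
  have htop := hlayer m₀
  rw [hΔtop, add_zero] at htop
  rw [htop, sum_range_succ, hΔtop, add_zero]
  linarith

theorem dotProduct_output_le_crown_bound {p q : ℝ≥0∞} [p.HolderConjugate q]
    {x₀ : Fin (n 0) → ℝ} {ε : ℝ} (hx : ‖WithLp.toLp p (a 0 - x₀)‖ ≤ ε)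
    (ha : ∀ k, k + 1 ≤ m₀ → a (k + 1) = fun r => σ ((W k *ᵥ a k + b k) r))
    (hΛ0 : Λ 0 = Λ 1 ᵥ* W 0) (hΔtop : Δ (m₀ + 1) = 0)
    (hstep : ∀ k, k + 1 ≤ m₀ → ∀ i,
      (Λ (k + 2) ᵥ* W (k + 1)) i * σ ((W k *ᵥ a k + b k) i) ≤
        Λ (k + 1) i * ((W k *ᵥ a k + b k) i + Δ (k + 1) i)) :
    Λ (m₀ + 1) ⬝ᵥ (W m₀ *ᵥ a m₀ + b m₀) ≤
      ε * ‖WithLp.toLp q (Λ 0)‖ + Λ 0 ⬝ᵥ x₀ +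
        ∑ k ∈ range (m₀ + 1), Λ (k + 1) ⬝ᵥ (b k + Δ (k + 1)) := by
  have : Fact (1 ≤ q) := ⟨ENNReal.HolderConjugate.one_le q p⟩
  have hHolder : Λ 0 ⬝ᵥ (a 0 - x₀) ≤ ε * ‖WithLp.toLp q (Λ 0)‖ :=
    calc Λ 0 ⬝ᵥ (a 0 - x₀) ≤ ‖WithLp.toLp q (Λ 0)‖ * ‖WithLp.toLp p (a 0 - x₀)‖ :=
          PiLp.sum_mul_le_norm_mul_norm q p _ _
      _ ≤ ε * ‖WithLp.toLp q (Λ 0)‖ := by rw [mul_comm]; gcongr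
  have hbackward := dotProduct_output_le_input_add_sum ha hΔtop hstep
  rw [← hΛ0] at hbackward
  rw [dotProduct_sub] at hHolder
  linarith

end BackwardBound

theorem crown_closed_form_global_bounds_general (m₀ : ℕ) (n : ℕ → ℕ)
    (W : (k : ℕ) → Matrix (Fin (n (k + 1))) (Fin (n k)) ℝ)
    (b : (k : ℕ) → Fin (n (k + 1)) → ℝ)
    (σ : ℝ → ℝ)
    -- the network
    (Φ : (k : ℕ) → (Fin (n 0) → ℝ) → (Fin (n k) → ℝ))
    (hΦ0 : ∀ x, Φ 0 x = x)
    (hΦ : ∀ k, k + 1 ≤ m₀ → ∀ x,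
      Φ (k + 1) x = fun r => σ (((W k).mulVec (Φ k x) + b k) r))
    (f : (Fin (n 0) → ℝ) → (Fin (n (m₀ + 1)) → ℝ))
    (hf : ∀ x, f x = (W m₀).mulVec (Φ m₀ x) + b m₀)
    -- the perturbation ball and the conjugate exponent
    (p q : ℝ≥0∞) (hpq : p⁻¹ + q⁻¹ = 1)
    (x₀ : Fin (n 0) → ℝ) (ε : ℝ)
    -- pre-activation bounds for hidden layers k+1 ∈ {1, …, m₀}
    (l u : (k : ℕ) → Fin (n k) → ℝ)
    (hpre : ∀ k, k + 1 ≤ m₀ → ∀ r : Fin (n (k + 1)), ∀ x : Fin (n 0) → ℝ,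
      ‖(WithLp.equiv p (Fin (n 0) → ℝ)).symm (x - x₀)‖ ≤ ε →
      l (k + 1) r ≤ ((W k).mulVec (Φ k x) + b k) r ∧
        ((W k).mulVec (Φ k x) + b k) r ≤ u (k + 1) r)
    -- linear bounds on the activation function for hidden layers k+1 ∈ {1, …, m₀}
    (αU αL βU βL : (k : ℕ) → Fin (n k) → ℝ)
    (hσbound : ∀ k, k + 1 ≤ m₀ → ∀ r : Fin (n (k + 1)),
      ∀ y ∈ Set.Icc (l (k + 1) r) (u (k + 1) r),
      αL (k + 1) r * (y + βL (k + 1) r) ≤ σ y ∧ σ y ≤ αU (k + 1) r * (y + βU (k + 1) r))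
    -- the output coordinate
    (j : Fin (n (m₀ + 1)))
    -- the backward recursion for the upper bound
    (Λ Δ : (k : ℕ) → Fin (n k) → ℝ)
    (hΛtop : ∀ i, Λ (m₀ + 1) i = if i = j then 1 else 0)
    (hΛ : ∀ k, k ≤ m₀ → ∀ i : Fin (n k),
      Λ k i = (∑ r, Λ (k + 1) r * W k r i) *
        (if k = 0 then 1
         else if 0 ≤ ∑ r, Λ (k + 1) r * W k r i then αU k i else αL k i))
    (hΔtop : ∀ i, Δ (m₀ + 1) i = 0)
    (hΔ : ∀ k, 1 ≤ k → k ≤ m₀ → ∀ i : Fin (n k),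
      Δ k i = if 0 ≤ ∑ r, Λ (k + 1) r * W k r i then βU k i else βL k i)
    -- the backward recursion for the lower bound
    (Ω Θ : (k : ℕ) → Fin (n k) → ℝ)
    (hΩtop : ∀ i, Ω (m₀ + 1) i = if i = j then 1 else 0)
    (hΩ : ∀ k, k ≤ m₀ → ∀ i : Fin (n k),
      Ω k i = (∑ r, Ω (k + 1) r * W k r i) *
        (if k = 0 then 1
         else if 0 ≤ ∑ r, Ω (k + 1) r * W k r i then αL k i else αU k i))
    (hΘtop : ∀ i, Θ (m₀ + 1) i = 0)
    (hΘ : ∀ k, 1 ≤ k → k ≤ m₀ → ∀ i : Fin (n k),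
      Θ k i = if 0 ≤ ∑ r, Ω (k + 1) r * W k r i then βL k i else βU k i) :
    ∀ x : Fin (n 0) → ℝ, ‖(WithLp.equiv p (Fin (n 0) → ℝ)).symm (x - x₀)‖ ≤ ε →
      -ε * ‖(WithLp.equiv q (Fin (n 0) → ℝ)).symm (Ω 0)‖ + (∑ i, Ω 0 i * x₀ i) +
          (∑ k ∈ Finset.range (m₀ + 1), ∑ i, Ω (k + 1) i * (b k i + Θ (k + 1) i)) ≤ f x j ∧
      f x j ≤ ε * ‖(WithLp.equiv q (Fin (n 0) → ℝ)).symm (Λ 0)‖ + (∑ i, Λ 0 i * x₀ i) +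
          (∑ k ∈ Finset.range (m₀ + 1), ∑ i, Λ (k + 1) i * (b k i + Δ (k + 1) i)) := by
  intro x hx
  have hpq' : p.HolderConjugate q := ENNReal.holderConjugate_iff.2 hpq
  have : Fact (1 ≤ q) := ⟨hpq'.symm.one_le⟩
  have hσz := fun k hk i => hσbound k hk i _ (hpre k hk i x hx)
  have hΦx : ‖WithLp.toLp p (Φ 0 x - x₀)‖ ≤ ε := by rwa [hΦ0]
  have hupper := dotProduct_output_le_crown_bound (q := q) (a := (Φ · x)) (Λ := Λ)
    (Δ := Δ) hΦx (fun k hk => hΦ k hk x)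
    (funext fun i => by simpa [vecMul, dotProduct] using hΛ 0 m₀.zero_le i) (funext hΔtop)
    fun k hk i => by
      rw [hΛ (k + 1) hk i, if_neg k.succ_ne_zero, hΔ (k + 1) k.succ_pos hk i]
      exact mul_le_mul_ite_of_le_of_le (hσz k hk i).1 (hσz k hk i).2
  have hlower := dotProduct_output_le_crown_bound (q := q) (a := (Φ · x)) (Λ := -Ω)
    (Δ := Θ) hΦx (fun k hk => hΦ k hk x)
    (funext fun i => by simpa [vecMul, dotProduct] using hΩ 0 m₀.zero_le i) (funext hΘtop)
    fun k hk i => by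
      simp only [Pi.neg_apply, neg_vecMul, neg_mul, neg_le_neg_iff]
      rw [hΩ (k + 1) hk i, if_neg k.succ_ne_zero, hΘ (k + 1) k.succ_pos hk i]
      exact mul_ite_le_mul_of_le_of_le (hσz k hk i).1 (hσz k hk i).2
  have hΛtop' : Λ (m₀ + 1) = Pi.single j 1 := funext fun i => by simp [hΛtop, Pi.single_apply]
  have hΩtop' : Ω (m₀ + 1) = Pi.single j 1 := funext fun i => by simp [hΩtop, Pi.single_apply]
  rw [← hf, hΛtop', single_dotProduct, one_mul] at hupper
  simp only [Pi.neg_apply, neg_dotProduct, ← hf, hΩtop', single_dotProduct, one_mul,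
    WithLp.toLp_neg, norm_neg, sum_neg_distrib] at hlower
  simp only [dotProduct, Pi.add_apply] at hlower
  refine ⟨?_, hupper⟩
  rw [WithLp.equiv_symm_apply]
  linarith

/-- **CROWN closed-form global bounds (Corollary 3.3).**
Under the hypotheses of Theorem 3.1 (an `m = m₀ + 1` layer network, pre-activation bounds
valid on the `ℓ_p` ball of radius `ε` around `x₀`, linear activation bounds, and the matrices
`Λ, Δ` and `Ω, Θ` constructed by the sign-based backward recursion), with `q` the conjugate
exponent of `p` (`1/p + 1/q = 1`), the fixed values
`γU = ε ‖Λ 0‖_q + Λ 0 ⋅ x₀ + Σ_{k=1}^{m} Λ k ⋅ (b^{(k)} + Δ k)` and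
`γL = -ε ‖Ω 0‖_q + Ω 0 ⋅ x₀ + Σ_{k=1}^{m} Ω k ⋅ (b^{(k)} + Θ k)`
satisfy `γL ≤ f_j x ≤ γU` for all `x` in the ball. -/
theorem crown_closed_form_global_bounds (m₀ : ℕ) (n : ℕ → ℕ)
    (W : (k : ℕ) → Matrix (Fin (n (k + 1))) (Fin (n k)) ℝ)
    (b : (k : ℕ) → Fin (n (k + 1)) → ℝ)
    (σ : ℝ → ℝ)
    -- the network
    (Φ : (k : ℕ) → (Fin (n 0) → ℝ) → (Fin (n k) → ℝ))
    (hΦ0 : ∀ x, Φ 0 x = x)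
    (hΦ : ∀ k, k + 1 ≤ m₀ → ∀ x,
      Φ (k + 1) x = fun r => σ (((W k).mulVec (Φ k x) + b k) r))
    (f : (Fin (n 0) → ℝ) → (Fin (n (m₀ + 1)) → ℝ))
    (hf : ∀ x, f x = (W m₀).mulVec (Φ m₀ x) + b m₀)
    -- the perturbation ball and the conjugate exponent
    (p q : ℝ≥0∞) (hp : 1 ≤ p) (hpq : p⁻¹ + q⁻¹ = 1)
    (x₀ : Fin (n 0) → ℝ) (ε : ℝ) (hε : 0 < ε)
    -- pre-activation bounds for hidden layers k+1 ∈ {1, …, m₀}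
    (l u : (k : ℕ) → Fin (n k) → ℝ)
    (hlu : ∀ k, k + 1 ≤ m₀ → ∀ r : Fin (n (k + 1)), l (k + 1) r ≤ u (k + 1) r)
    (hpre : ∀ k, k + 1 ≤ m₀ → ∀ r : Fin (n (k + 1)), ∀ x : Fin (n 0) → ℝ,
      ‖(WithLp.equiv p (Fin (n 0) → ℝ)).symm (x - x₀)‖ ≤ ε →
      l (k + 1) r ≤ ((W k).mulVec (Φ k x) + b k) r ∧
        ((W k).mulVec (Φ k x) + b k) r ≤ u (k + 1) r)
    -- linear bounds on the activation function for hidden layers k+1 ∈ {1, …, m₀}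
    (αU αL βU βL : (k : ℕ) → Fin (n k) → ℝ)
    (hαU : ∀ k, k + 1 ≤ m₀ → ∀ r : Fin (n (k + 1)), 0 ≤ αU (k + 1) r)
    (hαL : ∀ k, k + 1 ≤ m₀ → ∀ r : Fin (n (k + 1)), 0 ≤ αL (k + 1) r)
    (hσbound : ∀ k, k + 1 ≤ m₀ → ∀ r : Fin (n (k + 1)),
      ∀ y ∈ Set.Icc (l (k + 1) r) (u (k + 1) r),
      αL (k + 1) r * (y + βL (k + 1) r) ≤ σ y ∧ σ y ≤ αU (k + 1) r * (y + βU (k + 1) r))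
    -- the output coordinate
    (j : Fin (n (m₀ + 1)))
    -- the backward recursion for the upper bound
    (Λ Δ : (k : ℕ) → Fin (n k) → ℝ)
    (hΛtop : ∀ i, Λ (m₀ + 1) i = if i = j then 1 else 0)
    (hΛ : ∀ k, k ≤ m₀ → ∀ i : Fin (n k),
      Λ k i = (∑ r, Λ (k + 1) r * W k r i) *
        (if k = 0 then 1
         else if 0 ≤ ∑ r, Λ (k + 1) r * W k r i then αU k i else αL k i))
    (hΔtop : ∀ i, Δ (m₀ + 1) i = 0)
    (hΔ : ∀ k, 1 ≤ k → k ≤ m₀ → ∀ i : Fin (n k),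
      Δ k i = if 0 ≤ ∑ r, Λ (k + 1) r * W k r i then βU k i else βL k i)
    -- the backward recursion for the lower bound
    (Ω Θ : (k : ℕ) → Fin (n k) → ℝ)
    (hΩtop : ∀ i, Ω (m₀ + 1) i = if i = j then 1 else 0)
    (hΩ : ∀ k, k ≤ m₀ → ∀ i : Fin (n k),
      Ω k i = (∑ r, Ω (k + 1) r * W k r i) *
        (if k = 0 then 1
         else if 0 ≤ ∑ r, Ω (k + 1) r * W k r i then αL k i else αU k i))
    (hΘtop : ∀ i, Θ (m₀ + 1) i = 0)
    (hΘ : ∀ k, 1 ≤ k → k ≤ m₀ → ∀ i : Fin (n k),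
      Θ k i = if 0 ≤ ∑ r, Ω (k + 1) r * W k r i then βL k i else βU k i) :
    ∀ x : Fin (n 0) → ℝ, ‖(WithLp.equiv p (Fin (n 0) → ℝ)).symm (x - x₀)‖ ≤ ε →
      -ε * ‖(WithLp.equiv q (Fin (n 0) → ℝ)).symm (Ω 0)‖ + (∑ i, Ω 0 i * x₀ i) +
          (∑ k ∈ Finset.range (m₀ + 1), ∑ i, Ω (k + 1) i * (b k i + Θ (k + 1) i)) ≤ f x j ∧
      f x j ≤ ε * ‖(WithLp.equiv q (Fin (n 0) → ℝ)).symm (Λ 0)‖ + (∑ i, Λ 0 i * x₀ i) +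
          (∑ k ∈ Finset.range (m₀ + 1), ∑ i, Λ (k + 1) i * (b k i + Δ (k + 1) i)) :=
  crown_closed_form_global_bounds_general m₀ n W b σ Φ hΦ0 hΦ f hf p q hpq x₀ ε l u hpre αU αL βU βL
    hσbound j Λ Δ hΛtop hΛ hΔtop hΔ Ω Θ hΩtop hΩ hΘtop hΘ
end

section
/- Let 0 ≤ l < u and d ∈ [l, u]. Then for every y ∈ [l, u]: (i) tanh(y) ≤ tanh(d) + (1 − tanh(d)²)(y − d) (the tangent line at d is an upper bound), and (ii) tanh(y) ≥ tanh(l) + ((tanh(u) − tanh(l))/(u − l))(y − l) (the chord through the endpoints is a lower bound). -/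
/-!
On `[0, ∞)` the derivative `1 - tanh² = 1 / cosh²` of `tanh` decreases, so `tanh` is concave
there. A concave function lies below each of its tangent lines and, between two points, above
the chord through them.
-/

open Real Set

namespace Real

theorem one_sub_tanh_sq (x : ℝ) : 1 - tanh x ^ 2 = (cosh x ^ 2)⁻¹ := by
  have := cosh_sq_sub_sinh_sq x
  have := (cosh_pos x).ne'
  rw [tanh_eq_sinh_div_cosh]
  field_simp
  linarith

theorem hasDerivAt_tanh (x : ℝ) : HasDerivAt tanh (1 - tanh x ^ 2) x := by
  have h := (hasDerivAt_sinh x).div (hasDerivAt_cosh x) (cosh_pos x).ne'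
  rw [show sinh / cosh = tanh from funext fun y => (tanh_eq_sinh_div_cosh y).symm] at h
  refine h.congr_deriv ?_
  rw [one_sub_tanh_sq, ← one_div, ← cosh_sq_sub_sinh_sq x]
  ring

theorem deriv_tanh : deriv tanh = fun x => 1 - tanh x ^ 2 :=
  funext fun x => (hasDerivAt_tanh x).deriv

theorem concaveOn_tanh_Ici : ConcaveOn ℝ (Ici 0) tanh := by
  refine AntitoneOn.concaveOn_of_deriv (convex_Ici 0)
    (fun x _ => (hasDerivAt_tanh x).continuousAt.continuousWithinAt)
    (fun x _ => (hasDerivAt_tanh x).differentiableAt.differentiableWithinAt) ?_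
  intro x hx y hy hxy
  rw [interior_Ici] at hx hy
  have hcosh : cosh x ≤ cosh y := by
    rw [cosh_le_cosh, abs_of_pos hx, abs_of_pos hy]
    exact hxy
  simp only [deriv_tanh, one_sub_tanh_sq]
  gcongr

end Real

theorem ConcaveOn.le_add_mul_sub_of_hasDerivAt {S : Set ℝ} {f : ℝ → ℝ} {f' x y : ℝ}
    (hf : ConcaveOn ℝ S f) (hx : x ∈ S) (hy : y ∈ S) (hf' : HasDerivAt f f' x) :
    f y ≤ f x + f' * (y - x) := by
  rcases lt_trichotomy y x with hyx | rfl | hxy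
  · have h := hf.le_slope_of_hasDerivAt hy hx hyx hf'
    rw [slope_def_field, le_div_iff₀ (sub_pos.2 hyx)] at h
    linarith
  · simp
  · have h := hf.slope_le_of_hasDerivAt hx hy hxy hf'
    rw [slope_def_field, div_le_iff₀ (sub_pos.2 hxy)] at h
    linarith

theorem ConcaveOn.add_slope_mul_sub_le {𝕜 : Type*} [Field 𝕜] [LinearOrder 𝕜]
    [IsStrictOrderedRing 𝕜] {s : Set 𝕜} {f : 𝕜 → 𝕜} {a b y : 𝕜}
    (hf : ConcaveOn 𝕜 s f) (ha : a ∈ s) (hb : b ∈ s) (hy : y ∈ Icc a b) :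
    f a + slope f a b * (y - a) ≤ f y := by
  rcases eq_or_lt_of_le hy.1 with rfl | hay
  · simp
  have hys : y ∈ s := hf.1.segment_subset ha hb (Icc_subset_segment hy)
  have hslope : slope f a b ≤ slope f a y :=
    hf.slope_anti ha ⟨hys, hay.ne'⟩ ⟨hb, (hay.trans_le hy.2).ne'⟩ hy.2
  calc f a + slope f a b * (y - a) ≤ f a + slope f a y * (y - a) := by gcongr
    _ = f y := by rw [mul_comm, ← smul_eq_mul, sub_smul_slope, vsub_eq_sub, add_sub_cancel]

theorem tanh_crown_bounds_nonneg_general (l u d : ℝ) (hl : 0 ≤ l)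
    (hd : d ∈ Set.Icc l u) :
    ∀ y ∈ Set.Icc l u,
      Real.tanh y ≤ Real.tanh d + (1 - Real.tanh d ^ 2) * (y - d) ∧
      Real.tanh l + ((Real.tanh u - Real.tanh l) / (u - l)) * (y - l) ≤ Real.tanh y := by
  intro y hy
  have nonneg : ∀ z ∈ Icc l u, z ∈ Ici (0 : ℝ) := fun z hz => hl.trans hz.1
  have hu : u ∈ Icc l u := ⟨hy.1.trans hy.2, le_rfl⟩
  refine ⟨concaveOn_tanh_Ici.le_add_mul_sub_of_hasDerivAt (nonneg d hd) (nonneg y hy)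
    (hasDerivAt_tanh d), ?_⟩
  rw [← slope_def_field]
  exact concaveOn_tanh_Ici.add_slope_mul_sub_le (nonneg l (left_mem_Icc.2 hu.1)) (nonneg u hu) hy

/-- CROWN linear bounds for a tanh neuron whose pre-activation interval `[l, u]` lies in
`[0, ∞)`: the tangent line at any `d ∈ [l, u]` is an upper bound and the chord through the
endpoints is a lower bound. -/
theorem tanh_crown_bounds_nonneg (l u d : ℝ) (hl : 0 ≤ l) (hlu : l < u)
    (hd : d ∈ Set.Icc l u) :
    ∀ y ∈ Set.Icc l u,
      Real.tanh y ≤ Real.tanh d + (1 - Real.tanh d ^ 2) * (y - d) ∧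
      Real.tanh l + ((Real.tanh u - Real.tanh l) / (u - l)) * (y - l) ≤ Real.tanh y :=
  tanh_crown_bounds_nonneg_general l u d hl hd
end

section
/- Let σ(y) = 1/(1 + e^{−y}) and let 0 ≤ l < u and d ∈ [l, u]. Then for every y ∈ [l, u]: (i) σ(y) ≤ σ(d) + σ(d)(1 − σ(d))(y − d) (the tangent line at d is an upper bound), and (ii) σ(y) ≥ σ(l) + ((σ(u) − σ(l))/(u − l))(y − l) (the chord through the endpoints is a lower bound). -/
/-!
On `[0, ∞)` the sigmoid is concave: its derivative `σ (1 - σ)` is antitone there, because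
`σ ≥ 1/2` on `[0, ∞)` and `t ↦ t (1 - t)` decreases for `t ≥ 1/2`. A differentiable concave
function lies below each of its tangent lines and above each of its chords.
-/

/-- The sigmoid (logistic) function `σ(y) = 1 / (1 + exp (-y))`. -/
noncomputable def sigmoid (y : ℝ) : ℝ := 1 / (1 + Real.exp (-y))

open Set

theorem sigmoid_eq_real_sigmoid : sigmoid = Real.sigmoid :=
  funext fun _ => one_div _

theorem ConcaveOn.le_tangent_of_hasDerivAt {s : Set ℝ} {f : ℝ → ℝ} {f' x y : ℝ}
    (hf : ConcaveOn ℝ s f) (hx : x ∈ s) (hy : y ∈ s) (hf' : HasDerivAt f f' x) :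
    f y ≤ f x + f' * (y - x) := by
  rcases lt_trichotomy y x with hyx | rfl | hxy
  · have hslope := hf.le_slope_of_hasDerivAt hy hx hyx hf'
    rw [slope_def_field, le_div_iff₀ (sub_pos.2 hyx)] at hslope
    linarith
  · simp
  · have hslope := hf.slope_le_of_hasDerivAt hx hy hxy hf'
    rw [slope_def_field, div_le_iff₀ (sub_pos.2 hxy)] at hslope
    linarith

theorem ConcaveOn.secant_le_of_mem_Icc {𝕜 : Type*} [Field 𝕜] [LinearOrder 𝕜]
    [IsStrictOrderedRing 𝕜] {s : Set 𝕜} {f : 𝕜 → 𝕜} (hf : ConcaveOn 𝕜 s f) {l u y : 𝕜}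
    (hl : l ∈ s) (hu : u ∈ s) (hy : y ∈ Icc l u) :
    f l + (f u - f l) / (u - l) * (y - l) ≤ f y := by
  obtain rfl | hly := hy.1.eq_or_lt
  · simp
  have hlu : 0 < u - l := by linarith [hy.2]
  -- `y = ((u - y) • l + (y - l) • u) / (u - l)`
  have key := hf.2 hl hu (div_nonneg (sub_nonneg.2 hy.2) hlu.le)
    (div_nonneg (sub_nonneg.2 hy.1) hlu.le) (by field_simp; ring)
  convert key using 1
  · simp only [smul_eq_mul]
    field_simp
    ring
  · congr 1
    simp only [smul_eq_mul]
    field_simp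
    ring

theorem Real.concaveOn_sigmoid_Ici : ConcaveOn ℝ (Ici 0) Real.sigmoid := by
  refine AntitoneOn.concaveOn_of_deriv (convex_Ici 0) continuous_sigmoid.continuousOn
    differentiable_sigmoid.differentiableOn ?_
  rw [interior_Ici, Real.deriv_sigmoid]
  intro a ha b _ hab
  have h_half : 2⁻¹ ≤ Real.sigmoid a := Real.sigmoid_zero ▸ Real.sigmoid_le (le_of_lt ha)
  have h_mono : Real.sigmoid a ≤ Real.sigmoid b := Real.sigmoid_le hab
  -- with `p = σ a`, `q = σ b`: `p (1 - p) - q (1 - q) = (q - p) (p + q - 1)`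
  nlinarith [mul_nonneg (sub_nonneg.2 h_mono)
    (by linarith : (0 : ℝ) ≤ Real.sigmoid a + Real.sigmoid b - 1)]

theorem sigmoid_crown_bounds_nonneg_general (l u d : ℝ) (hl : 0 ≤ l)
    (hd : d ∈ Set.Icc l u) :
    ∀ y ∈ Set.Icc l u,
      sigmoid y ≤ sigmoid d + sigmoid d * (1 - sigmoid d) * (y - d) ∧
      sigmoid l + ((sigmoid u - sigmoid l) / (u - l)) * (y - l) ≤ sigmoid y := by
  intro y hy
  rw [sigmoid_eq_real_sigmoid]
  have hmem : ∀ x, l ≤ x → x ∈ Ici (0 : ℝ) := fun x hx => hl.trans hx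
  exact ⟨Real.concaveOn_sigmoid_Ici.le_tangent_of_hasDerivAt (hmem d hd.1) (hmem y hy.1)
      (Real.hasDerivAt_sigmoid d),
    Real.concaveOn_sigmoid_Ici.secant_le_of_mem_Icc (hmem l le_rfl) (hmem u (hy.1.trans hy.2)) hy⟩

/-- CROWN linear bounds for a sigmoid neuron whose pre-activation interval `[l, u]` lies in
`[0, ∞)`: the tangent line at any `d ∈ [l, u]` is an upper bound and the chord through the
endpoints is a lower bound. -/
theorem sigmoid_crown_bounds_nonneg (l u d : ℝ) (hl : 0 ≤ l) (hlu : l < u)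
    (hd : d ∈ Set.Icc l u) :
    ∀ y ∈ Set.Icc l u,
      sigmoid y ≤ sigmoid d + sigmoid d * (1 - sigmoid d) * (y - d) ∧
      sigmoid l + ((sigmoid u - sigmoid l) / (u - l)) * (y - l) ≤ sigmoid y :=
  sigmoid_crown_bounds_nonneg_general l u d hl hd
end

section
/- Let σ(y) = 1/(1 + e^{−y}) and let l < u ≤ 0 and d ∈ [l, u]. Then for every y ∈ [l, u]: (i) σ(y) ≤ σ(l) + ((σ(u) − σ(l))/(u − l))(y − l) (the chord through the endpoints is an upper bound), and (ii) σ(y) ≥ σ(d) + σ(d)(1 − σ(d))(y − d) (the tangent line at d is a lower bound). -/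
open Set

namespace ConvexOn

variable {s : Set ℝ} {f : ℝ → ℝ}

theorem le_add_slope_mul_sub (hf : ConvexOn ℝ s f) {a b x : ℝ} (ha : a ∈ s) (hb : b ∈ s)
    (hx : x ∈ Icc a b) : f x ≤ f a + slope f a b * (x - a) := by
  rcases eq_or_lt_of_le hx.1 with rfl | hax
  · simp
  have hxs : x ∈ s := hf.1.ordConnected.out ha hb hx
  have hsecant := hf.secant_mono ha hxs hb hax.ne' (hax.trans_le hx.2).ne' hx.2
  rw [div_le_iff₀ (sub_pos.2 hax), ← slope_def_field] at hsecant
  linarith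

theorem add_mul_sub_le_of_hasDerivAt (hf : ConvexOn ℝ s f) {x y f' : ℝ} (hx : x ∈ s)
    (hy : y ∈ s) (hderiv : HasDerivAt f f' x) : f x + f' * (y - x) ≤ f y := by
  rcases lt_trichotomy y x with hyx | rfl | hxy
  · have hslope := hf.slope_le_of_hasDerivAt hy hx hyx hderiv
    rw [slope_def_field, div_le_iff₀ (sub_pos.2 hyx)] at hslope
    linarith
  · simp
  · have hslope := hf.le_slope_of_hasDerivAt hx hy hxy hderiv
    rw [slope_def_field, le_div_iff₀ (sub_pos.2 hxy)] at hslope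
    linarith

end ConvexOn

theorem monotoneOn_mul_one_sub : MonotoneOn (fun t : ℝ => t * (1 - t)) (Iic (1 / 2)) := by
  intro a _ b hb hab
  simp only [mem_Iic] at hb
  nlinarith

theorem Real.sigmoid_le_half {y : ℝ} (hy : y ≤ 0) : Real.sigmoid y ≤ 1 / 2 := by
  simpa [Real.sigmoid_zero] using Real.sigmoid_le hy

theorem Real.convexOn_sigmoid_Iic : ConvexOn ℝ (Iic 0) Real.sigmoid := by
  refine MonotoneOn.convexOn_of_deriv (convex_Iic 0) continuous_sigmoid.continuousOn
    differentiable_sigmoid.differentiableOn ?_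
  rw [Real.deriv_sigmoid, interior_Iic]
  intro a ha b hb hab
  exact monotoneOn_mul_one_sub (Real.sigmoid_le_half (le_of_lt ha))
    (Real.sigmoid_le_half (le_of_lt hb)) (Real.sigmoid_le hab)

theorem sigmoid_crown_bounds_nonpos_general (l u d : ℝ) (hu : u ≤ 0)
    (hd : d ∈ Set.Icc l u) :
    ∀ y ∈ Set.Icc l u,
      sigmoid y ≤ sigmoid l + ((sigmoid u - sigmoid l) / (u - l)) * (y - l) ∧
      sigmoid d + sigmoid d * (1 - sigmoid d) * (y - d) ≤ sigmoid y := by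
  intro y hy
  have hconvex := Real.convexOn_sigmoid_Iic
  have hl : l ∈ Iic (0 : ℝ) := hy.1.trans (hy.2.trans hu)
  have hy' : y ∈ Iic (0 : ℝ) := hy.2.trans hu
  have hd' : d ∈ Iic (0 : ℝ) := hd.2.trans hu
  rw [sigmoid_eq_real_sigmoid]
  constructor
  · simpa only [slope_def_field] using hconvex.le_add_slope_mul_sub hl hu hy
  · exact hconvex.add_mul_sub_le_of_hasDerivAt hd' hy' (Real.hasDerivAt_sigmoid d)

/-- CROWN linear bounds for a sigmoid neuron whose pre-activation interval `[l, u]` lies in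
`(-∞, 0]`: the chord through the endpoints is an upper bound and the tangent line at any
`d ∈ [l, u]` is a lower bound. -/
theorem sigmoid_crown_bounds_nonpos (l u d : ℝ) (hu : u ≤ 0) (hlu : l < u)
    (hd : d ∈ Set.Icc l u) :
    ∀ y ∈ Set.Icc l u,
      sigmoid y ≤ sigmoid l + ((sigmoid u - sigmoid l) / (u - l)) * (y - l) ∧
      sigmoid d + sigmoid d * (1 - sigmoid d) * (y - d) ≤ sigmoid y :=
  sigmoid_crown_bounds_nonpos_general l u d hu hd
end

section
/- Consider a 2-layer network f_j(x) = Σ_{i=1}^{n₁} W²_{j,i} σ(y_i(x)) + b²_j, where y_i(x) = (W¹x + b¹)_i, W¹ ∈ ℝ^{n₁×n₀}, W² ∈ ℝ^{n_2×n₁}, b¹ ∈ ℝ^{n₁}, b² ∈ ℝ^{n_2}, and σ : ℝ → ℝ. Suppose for each i there are reals l_i ≤ u_i and quadratic bounds with parameters η_{U,i}, η_{L,i} ∈ ℝ, α_{U,i}, α_{L,i} ≥ 0, β_{U,i}, β_{L,i} ∈ ℝ such that η_{L,i} y² + α_{L,i}(y + β_{L,i}) ≤ σ(y) ≤ η_{U,i}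 y² + α_{U,i}(y + β_{U,i}) for all y ∈ [l_i, u_i]. Define upper-bound parameters (κ_i, λ_i, δ_i) = (η_{U,i}, α_{U,i}, β_{U,i}) if W²_{j,i} ≥ 0 and (η_{L,i}, α_{L,i}, β_{L,i}) if W²_{j,i} < 0, and lower-bound parameters (κ'_i, λ'_i, δ'_i) defined with the roles of the U- and L-parameters exchanged. Then for every x ∈ ℝ^{n₀} such that y_i(x) ∈ [l_i, u_i] for all i: Σ_i W²_{j,i}(κ'_i y_i(x)² + λ'_i(y_i(x) + δ'_i)) + b²_j ≤ f_j(x) ≤ Σ_i W²_{j,i}(κ_i y_i(x)² + λ_i(y_i(x) + δ_i)) + b²_j; both bounding expressions are quadratic functions of x of the form xᵀ W¹ᵀ D W¹ x + (linear in x) + constant with D diagonal. -/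
/-!
Multiplying a sandwich `lo ≤ σ y ≤ hi` by the outgoing weight `w` keeps the order when `w ≥ 0`
and reverses it when `w < 0`, which is why the bound used for each neuron is chosen by the sign
of `w`; summing over the neurons gives the bounds on the network output. Each chosen bound is a
quadratic polynomial in the pre-activation `y = W1 x + b1`, so the sum of their leading terms is
`∑ i D i (W1 x)_i² = xᵀ W1ᵀ (diagonal D) W1 x`, and everything else is affine in `x`.
-/

open Matrix

section SignedBound

variable {R : Type*} [Ring R] [LinearOrder R] [IsStrictOrderedRing R] {w lo s hi : R}

theorem mul_ite_le_mul_of_le_of_le_s18 (hlo : lo ≤ s) (hhi : s ≤ hi) :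
    w * (if 0 ≤ w then lo else hi) ≤ w * s := by
  split_ifs with hw
  · exact mul_le_mul_of_nonneg_left hlo hw
  · exact mul_le_mul_of_nonpos_left hhi (not_le.mp hw).le

theorem mul_le_mul_ite_of_le_of_le_s18 (hlo : lo ≤ s) (hhi : s ≤ hi) :
    w * s ≤ w * (if 0 ≤ w then hi else lo) := by
  split_ifs with hw
  · exact mul_le_mul_of_nonneg_left hhi hw
  · exact mul_le_mul_of_nonpos_left hlo (not_le.mp hw).le

end SignedBound

section QuadraticForm

variable {R : Type*} [CommRing R]

def IsQuadratic (q : R → R) : Prop :=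
  ∃ a b c : R, ∀ y, q y = a * y ^ 2 + b * y + c

theorem isQuadratic_mul_sq_add_mul_add (η α β : R) :
    IsQuadratic fun y => η * y ^ 2 + α * (y + β) :=
  ⟨η, α, α * β, fun y => by ring⟩

theorem IsQuadratic.const_mul {q : R → R} (hq : IsQuadratic q) (w : R) :
    IsQuadratic fun y => w * q y := by
  obtain ⟨a, b, c, hq⟩ := hq
  exact ⟨w * a, w * b, w * c, fun y => by simp only [hq]; ring⟩

theorem IsQuadratic.ite {q r : R → R} (hq : IsQuadratic q) (p : Prop) [Decidable p]
    (hr : IsQuadratic r) : IsQuadratic fun y => if p then q y else r y := by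
  split_ifs
  exacts [hq, hr]

variable {m n : Type*} [Fintype m] [Fintype n]

theorem transpose_mulVec_dotProduct (W : Matrix m n R) (v : m → R) (x : n → R) :
    Wᵀ *ᵥ v ⬝ᵥ x = v ⬝ᵥ W *ᵥ x := by
  rw [mulVec_transpose, dotProduct_mulVec]

variable [DecidableEq m]

theorem dotProduct_transpose_mul_diagonal_mul_mulVec (W : Matrix m n R) (D : m → R)
    (x : n → R) : x ⬝ᵥ (Wᵀ * diagonal D * W) *ᵥ x = ∑ i, D i * (W *ᵥ x) i ^ 2 := by
  rw [← mulVec_mulVec, ← mulVec_mulVec, dotProduct_mulVec, vecMul_transpose]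
  simp only [dotProduct, mulVec_diagonal]
  exact Finset.sum_congr rfl fun i _ => by ring

theorem exists_diagonal_quadForm_of_isQuadratic (W : Matrix m n R) (b : m → R) {q : m → R → R}
    (hq : ∀ i, IsQuadratic (q i)) :
    ∃ (D : m → R) (c : n → R) (s : R), ∀ x : n → R,
      ∑ i, q i ((W *ᵥ x + b) i) = x ⬝ᵥ (Wᵀ * diagonal D * W) *ᵥ x + c ⬝ᵥ x + s := by
  choose a a₁ a₀ hq using hq
  refine ⟨a, Wᵀ *ᵥ (fun i => 2 * a i * b i + a₁ i), ∑ i, (a i * b i ^ 2 + a₁ i * b i + a₀ i),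
    fun x => ?_⟩
  rw [dotProduct_transpose_mul_diagonal_mul_mulVec, transpose_mulVec_dotProduct]
  simp only [dotProduct, ← Finset.sum_add_distrib]
  exact Finset.sum_congr rfl fun i _ => by rw [hq, Pi.add_apply]; ring

end QuadraticForm

theorem crown_quadratic_two_layer_bounds_general (n₀ n₁ n₂ : ℕ)
    (W1 : Matrix (Fin n₁) (Fin n₀) ℝ) (W2 : Matrix (Fin n₂) (Fin n₁) ℝ)
    (b1 : Fin n₁ → ℝ) (b2 : Fin n₂ → ℝ) (σ : ℝ → ℝ)
    (l u ηU ηL αU αL βU βL : Fin n₁ → ℝ)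
    (hbound : ∀ i, ∀ y ∈ Set.Icc (l i) (u i),
      ηL i * y ^ 2 + αL i * (y + βL i) ≤ σ y ∧ σ y ≤ ηU i * y ^ 2 + αU i * (y + βU i))
    (j : Fin n₂) :
    (∀ x : Fin n₀ → ℝ, (∀ i, (W1.mulVec x + b1) i ∈ Set.Icc (l i) (u i)) →
      -- lower bound
      (∑ i, W2 j i *
          (if 0 ≤ W2 j i then
            ηL i * ((W1.mulVec x + b1) i) ^ 2 + αL i * ((W1.mulVec x + b1) i + βL i)
          else
            ηU i * ((W1.mulVec x + b1) i) ^ 2 + αU i * ((W1.mulVec x + b1) i + βU i))) + b2 j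
        ≤ (∑ i, W2 j i * σ ((W1.mulVec x + b1) i)) + b2 j ∧
      -- upper bound
      (∑ i, W2 j i * σ ((W1.mulVec x + b1) i)) + b2 j ≤
        (∑ i, W2 j i *
          (if 0 ≤ W2 j i then
            ηU i * ((W1.mulVec x + b1) i) ^ 2 + αU i * ((W1.mulVec x + b1) i + βU i)
          else
            ηL i * ((W1.mulVec x + b1) i) ^ 2 + αL i * ((W1.mulVec x + b1) i + βL i))) + b2 j) ∧
    -- the upper bounding expression is a quadratic form `xᵀ W1ᵀ D W1 x + cᵀ x + s` with `D` diagonal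
    (∃ (D : Fin n₁ → ℝ) (c : Fin n₀ → ℝ) (s : ℝ), ∀ x : Fin n₀ → ℝ,
      (∑ i, W2 j i *
          (if 0 ≤ W2 j i then
            ηU i * ((W1.mulVec x + b1) i) ^ 2 + αU i * ((W1.mulVec x + b1) i + βU i)
          else
            ηL i * ((W1.mulVec x + b1) i) ^ 2 + αL i * ((W1.mulVec x + b1) i + βL i))) + b2 j
        = x ⬝ᵥ (W1.transpose * Matrix.diagonal D * W1).mulVec x + c ⬝ᵥ x + s) ∧
    -- and so is the lower bounding expression
    (∃ (D : Fin n₁ → ℝ) (c : Fin n₀ → ℝ) (s : ℝ), ∀ x : Fin n₀ → ℝ,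
      (∑ i, W2 j i *
          (if 0 ≤ W2 j i then
            ηL i * ((W1.mulVec x + b1) i) ^ 2 + αL i * ((W1.mulVec x + b1) i + βL i)
          else
            ηU i * ((W1.mulVec x + b1) i) ^ 2 + αU i * ((W1.mulVec x + b1) i + βU i))) + b2 j
        = x ⬝ᵥ (W1.transpose * Matrix.diagonal D * W1).mulVec x + c ⬝ᵥ x + s) := by
  have hU i := isQuadratic_mul_sq_add_mul_add (ηU i) (αU i) (βU i)
  have hL i := isQuadratic_mul_sq_add_mul_add (ηL i) (αL i) (βL i)
  obtain ⟨DU, cU, sU, hquadU⟩ := exists_diagonal_quadForm_of_isQuadratic W1 b1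
    fun i => ((hU i).ite (0 ≤ W2 j i) (hL i)).const_mul (W2 j i)
  obtain ⟨DL, cL, sL, hquadL⟩ := exists_diagonal_quadForm_of_isQuadratic W1 b1
    fun i => ((hL i).ite (0 ≤ W2 j i) (hU i)).const_mul (W2 j i)
  refine ⟨fun x hx => ⟨?_, ?_⟩, ⟨DU, cU, sU + b2 j, fun x => ?_⟩, ⟨DL, cL, sL + b2 j, fun x => ?_⟩⟩
  · refine add_le_add_left (Finset.sum_le_sum fun i _ => ?_) _
    exact mul_ite_le_mul_of_le_of_le_s18 (hbound i _ (hx i)).1 (hbound i _ (hx i)).2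
  · refine add_le_add_left (Finset.sum_le_sum fun i _ => ?_) _
    exact mul_le_mul_ite_of_le_of_le_s18 (hbound i _ (hx i)).1 (hbound i _ (hx i)).2
  · rw [hquadU x, add_assoc]
  · rw [hquadL x, add_assoc]

/-- CROWN quadratic-approximation bound for a 2-layer network
`f_j(x) = Σ_i W2_{j,i} σ((W1 x + b1)_i) + b2_j`.  Each activation is sandwiched between a
quadratic lower bound `ηL y² + αL (y + βL)` and a quadratic upper bound `ηU y² + αU (y + βU)`
on its pre-activation interval `[l i, u i]`; the bounds are combined according to the sign of
the outgoing weight `W2 j i`.  Moreover, both bounding expressions are quadratic functions of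
`x` of the form `xᵀ W1ᵀ D W1 x + (linear in x) + constant` with `D` diagonal. -/
theorem crown_quadratic_two_layer_bounds (n₀ n₁ n₂ : ℕ)
    (W1 : Matrix (Fin n₁) (Fin n₀) ℝ) (W2 : Matrix (Fin n₂) (Fin n₁) ℝ)
    (b1 : Fin n₁ → ℝ) (b2 : Fin n₂ → ℝ) (σ : ℝ → ℝ)
    (l u ηU ηL αU αL βU βL : Fin n₁ → ℝ)
    (hlu : ∀ i, l i ≤ u i)
    (hαU : ∀ i, 0 ≤ αU i) (hαL : ∀ i, 0 ≤ αL i)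
    (hbound : ∀ i, ∀ y ∈ Set.Icc (l i) (u i),
      ηL i * y ^ 2 + αL i * (y + βL i) ≤ σ y ∧ σ y ≤ ηU i * y ^ 2 + αU i * (y + βU i))
    (j : Fin n₂) :
    (∀ x : Fin n₀ → ℝ, (∀ i, (W1.mulVec x + b1) i ∈ Set.Icc (l i) (u i)) →
      -- lower bound
      (∑ i, W2 j i *
          (if 0 ≤ W2 j i then
            ηL i * ((W1.mulVec x + b1) i) ^ 2 + αL i * ((W1.mulVec x + b1) i + βL i)
          else
            ηU i * ((W1.mulVec x + b1) i) ^ 2 + αU i * ((W1.mulVec x + b1) i + βU i))) + b2 j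
        ≤ (∑ i, W2 j i * σ ((W1.mulVec x + b1) i)) + b2 j ∧
      -- upper bound
      (∑ i, W2 j i * σ ((W1.mulVec x + b1) i)) + b2 j ≤
        (∑ i, W2 j i *
          (if 0 ≤ W2 j i then
            ηU i * ((W1.mulVec x + b1) i) ^ 2 + αU i * ((W1.mulVec x + b1) i + βU i)
          else
            ηL i * ((W1.mulVec x + b1) i) ^ 2 + αL i * ((W1.mulVec x + b1) i + βL i))) + b2 j) ∧
    -- the upper bounding expression is a quadratic form `xᵀ W1ᵀ D W1 x + cᵀ x + s` with `D` diagonal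
    (∃ (D : Fin n₁ → ℝ) (c : Fin n₀ → ℝ) (s : ℝ), ∀ x : Fin n₀ → ℝ,
      (∑ i, W2 j i *
          (if 0 ≤ W2 j i then
            ηU i * ((W1.mulVec x + b1) i) ^ 2 + αU i * ((W1.mulVec x + b1) i + βU i)
          else
            ηL i * ((W1.mulVec x + b1) i) ^ 2 + αL i * ((W1.mulVec x + b1) i + βL i))) + b2 j
        = x ⬝ᵥ (W1.transpose * Matrix.diagonal D * W1).mulVec x + c ⬝ᵥ x + s) ∧
    -- and so is the lower bounding expression
    (∃ (D : Fin n₁ → ℝ) (c : Fin n₀ → ℝ) (s : ℝ), ∀ x : Fin n₀ → ℝ,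
      (∑ i, W2 j i *
          (if 0 ≤ W2 j i then
            ηL i * ((W1.mulVec x + b1) i) ^ 2 + αL i * ((W1.mulVec x + b1) i + βL i)
          else
            ηU i * ((W1.mulVec x + b1) i) ^ 2 + αU i * ((W1.mulVec x + b1) i + βU i))) + b2 j
        = x ⬝ᵥ (W1.transpose * Matrix.diagonal D * W1).mulVec x + c ⬝ᵥ x + s) :=
  crown_quadratic_two_layer_bounds_general n₀ n₁ n₂ W1 W2 b1 b2 σ l u ηU ηL αU αL βU βL hbound j
end

section
/- Let l < 0 < u and for a ∈ [0, 1] define A(a) = ∫_l^u (max(0, y) − a·y) dy, the area between the ReLU function and the candidate linear lower bound h_L(y) = a·y on [l, u]. Then A(a) = u²/2 − a(u² − l²)/2, A(a) ≥ 0 for all a ∈ [0, 1], and: if u ≥ −l then A(1) ≤ A(a) for all a ∈ [0, 1], while if u ≤ −l then A(0) ≤ A(a) for all a ∈ [0, 1]. Hence the adaptive choice a = 1 when u ≥ |l| and a = 0 when u < |l| minimizes the area between the lower bound a·y and the ReLU function over a ∈ [0, 1]. -/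
/-- For an unstable ReLU neuron with pre-activation bounds `l < 0 < u`, let
`A a = ∫ y in l..u, (max 0 y - a * y)` be the area between the ReLU function and the candidate
linear lower bound `a * y` on `[l, u]`. Then `A a = u² / 2 - a * (u² - l²) / 2`, `A a ≥ 0` for
all `a ∈ [0, 1]`, and the adaptive choice `a = 1` when `u ≥ -l` (resp. `a = 0` when `u ≤ -l`)
minimizes `A` over `[0, 1]`. -/
theorem relu_adaptive_lower_bound_minimizes_area (l u : ℝ) (hl : l < 0) (hu : 0 < u)
    (A : ℝ → ℝ) (hA : ∀ a, A a = ∫ y in l..u, (max 0 y - a * y)) :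
    (∀ a, A a = u ^ 2 / 2 - a * (u ^ 2 - l ^ 2) / 2) ∧
    (∀ a ∈ Set.Icc (0 : ℝ) 1, 0 ≤ A a) ∧
    (-l ≤ u → ∀ a ∈ Set.Icc (0 : ℝ) 1, A 1 ≤ A a) ∧
    (u ≤ -l → ∀ a ∈ Set.Icc (0 : ℝ) 1, A 0 ≤ A a) := by
  have hmax : (∫ y in l..u, max 0 y) = u ^ 2 / 2 := by
    have h1 : (∫ y in l..(0:ℝ), max 0 y) = 0 := by
      rw [intervalIntegral.integral_congr (g := fun _ => (0:ℝ))]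
      · simp
      · intro y hy
        rw [Set.uIcc_of_le hl.le] at hy
        simp [max_eq_left hy.2]
    have h2 : (∫ y in (0:ℝ)..u, max 0 y) = u ^ 2 / 2 := by
      rw [intervalIntegral.integral_congr (g := fun y => y)]
      · rw [integral_id]; ring
      · intro y hy
        rw [Set.uIcc_of_le hu.le] at hy
        simp [max_eq_right hy.1]
    have := intervalIntegral.integral_add_adjacent_intervals
      (μ := MeasureTheory.volume) (a := l) (b := (0:ℝ)) (c := u) (f := fun y => max 0 y)
      ((continuous_const.max continuous_id).intervalIntegrable _ _)
      ((continuous_const.max continuous_id).intervalIntegrable _ _)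
    rw [← this, h1, h2, zero_add]
  have hformula : ∀ a, A a = u ^ 2 / 2 - a * (u ^ 2 - l ^ 2) / 2 := by
    intro a
    have hsub := intervalIntegral.integral_sub (μ := MeasureTheory.volume) (a := l) (b := u)
      (f := fun y => max 0 y) (g := fun y => a * y)
      ((Continuous.intervalIntegrable (by fun_prop) _ _))
      ((Continuous.intervalIntegrable (by fun_prop) _ _))
    rw [hA a, hsub, hmax, intervalIntegral.integral_const_mul, integral_id]
    ring
  refine ⟨hformula, ?_, ?_, ?_⟩
  · intro a ha
    rw [hformula]
    nlinarith [ha.1, ha.2, sq_nonneg l, sq_nonneg u,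
      mul_nonneg ha.1 (sq_nonneg l), mul_nonneg ha.1 (sq_nonneg u)]
  · intro hlu a ha
    rw [hformula, hformula]
    have h2 : l ^ 2 ≤ u ^ 2 := by nlinarith
    nlinarith [mul_nonneg (sub_nonneg.mpr ha.2) (sub_nonneg.mpr h2)]
  · intro hlu a ha
    rw [hformula, hformula]
    have h2 : u ^ 2 ≤ l ^ 2 := by nlinarith
    nlinarith [mul_nonneg ha.1 (sub_nonneg.mpr h2)]
end
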